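/- arXiv:math/0607707 — 3 statements merged into one kernel-verified Lean document; each statement's English description precedes it below -/
import Mathlib

section
/- Let σ, k, ω > 0 and for λ > 0 define C_λ(t) := σ²(t + (e^{-λt} − 1)/λ). Then each integral ∫₀^∞ sin(ωt) e^{-(1/2)k² C_λ(t)} dt converges absolutely, and as λ → ∞ it converges to ∫₀^∞ sin(ωt) e^{-(1/2)k²σ² t} dt = ω / ((1/4)k⁴σ⁴ + ω²). -/
/-!
With `b = k²σ²/2` the integrand is `sin (ω t) · exp (-b (t + r_λ t))`, where
`r_λ t = (e^{-λt} - 1)/λ` lies in `[-1/λ, 0]` and tends to `0` as `λ → ∞`. It is therefore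
dominated by `e^{b/λ} e^{-bt}`, which gives integrability and, by dominated convergence, the
limit. The limiting integral is the imaginary part of `∫₀^∞ e^{(-b + iω)t} dt = 1/(b - iω)`.
-/

open MeasureTheory Real Filter Topology Set

lemma sin_mul_exp_eq_im_exp (ω b t : ℝ) :
    sin (ω * t) * exp (-b * t) = (Complex.exp ((-b + ω * Complex.I) * t)).im := by
  simp [Complex.exp_im, mul_comm]

lemma integral_sin_mul_exp_neg_Ioi (ω : ℝ) {b : ℝ} (hb : 0 < b) :
    ∫ t in Ioi 0, sin (ω * t) * exp (-b * t) = ω / (b ^ 2 + ω ^ 2) := by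
  have ha : (-b + ω * Complex.I).re < 0 := by simpa using hb
  simp_rw [sin_mul_exp_eq_im_exp]
  rw [← RCLike.im_eq_complex_im, integral_im (integrableOn_exp_mul_complex_Ioi ha 0),
    integral_exp_mul_complex_Ioi ha 0]
  simp [Complex.normSq_apply, sq, neg_div]

section PerturbedExponent

variable (ω : ℝ) {b M : ℝ}

lemma norm_sin_mul_exp_neg_mul_add_le (t : ℝ) {r : ℝ} (hb : 0 ≤ b) (hr : -M ≤ r) :
    ‖sin (ω * t) * exp (-b * (t + r))‖ ≤ exp (b * M) * exp (-b * t) := by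
  rw [norm_mul, Real.norm_eq_abs, Real.norm_eq_abs, abs_exp, ← exp_add]
  calc |sin (ω * t)| * exp (-b * (t + r)) ≤ 1 * exp (-b * (t + r)) := by
        gcongr; exact abs_sin_le_one _
    _ ≤ exp (b * M + -b * t) := by
        rw [one_mul, exp_le_exp]
        nlinarith

lemma integrableOn_sin_mul_exp_neg_mul_add (hb : 0 < b) {r : ℝ → ℝ} (hr : Measurable r)
    (hM : ∀ t ∈ Ioi 0, -M ≤ r t) :
    IntegrableOn (fun t => sin (ω * t) * exp (-b * (t + r t))) (Ioi 0) := by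
  refine ((exp_neg_integrableOn_Ioi 0 hb).const_mul (exp (b * M))).mono'
    (by fun_prop : Measurable _).aestronglyMeasurable ?_
  filter_upwards [ae_restrict_mem measurableSet_Ioi] with t ht
  exact norm_sin_mul_exp_neg_mul_add_le ω t hb.le (hM t ht)

lemma tendsto_integral_sin_mul_exp_neg_mul_add {ι : Type*} {l : Filter ι}
    [l.IsCountablyGenerated] (hb : 0 < b) {r : ι → ℝ → ℝ} (hr : ∀ i, Measurable (r i))
    (hM : ∀ᶠ i in l, ∀ t ∈ Ioi 0, -M ≤ r i t)
    (hlim : ∀ t ∈ Ioi 0, Tendsto (fun i => r i t) l (𝓝 0)) :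
    Tendsto (fun i => ∫ t in Ioi 0, sin (ω * t) * exp (-b * (t + r i t))) l
      (𝓝 (∫ t in Ioi 0, sin (ω * t) * exp (-b * t))) := by
  refine tendsto_integral_filter_of_dominated_convergence (fun t => exp (b * M) * exp (-b * t))
    (Eventually.of_forall fun i => (by fun_prop : Measurable _).aestronglyMeasurable) ?_
    ((exp_neg_integrableOn_Ioi 0 hb).const_mul _) ?_
  · filter_upwards [hM] with i hi
    filter_upwards [ae_restrict_mem measurableSet_Ioi] with t ht
    exact norm_sin_mul_exp_neg_mul_add_le ω t hb.le (hi t ht)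
  · filter_upwards [ae_restrict_mem measurableSet_Ioi] with t ht
    have hcont : Continuous fun x => sin (ω * t) * exp (-b * (t + x)) := by fun_prop
    simpa only [Function.comp_def, add_zero] using (hcont.tendsto 0).comp (hlim t ht)

end PerturbedExponent

lemma neg_inv_le_exp_neg_mul_sub_one_div {lam : ℝ} (hlam : 0 < lam) (t : ℝ) :
    -lam⁻¹ ≤ (exp (-lam * t) - 1) / lam := by
  rw [inv_eq_one_div, ← neg_div]
  gcongr
  linarith [exp_pos (-lam * t)]

lemma tendsto_exp_neg_mul_sub_one_div_atTop {t : ℝ} (ht : 0 ≤ t) :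
    Tendsto (fun lam => (exp (-lam * t) - 1) / lam) atTop (𝓝 0) := by
  have hlower : ∀ᶠ lam in atTop, -lam⁻¹ ≤ (exp (-lam * t) - 1) / lam :=
    (eventually_gt_atTop 0).mono fun lam hlam => neg_inv_le_exp_neg_mul_sub_one_div hlam t
  have hupper : ∀ᶠ lam in atTop, (exp (-lam * t) - 1) / lam ≤ 0 := by
    filter_upwards [eventually_gt_atTop 0] with lam hlam
    have : exp (-lam * t) ≤ 1 := exp_le_one_iff.mpr (by nlinarith)
    exact div_nonpos_of_nonpos_of_nonneg (by linarith) hlam.le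
  have hinv : Tendsto (fun lam : ℝ => -lam⁻¹) atTop (𝓝 0) := by
    simpa using (tendsto_inv_atTop_zero (𝕜 := ℝ)).neg
  exact tendsto_of_tendsto_of_tendsto_of_le_of_le' hinv tendsto_const_nhds hlower hupper

theorem eddy_drift_integral_brownian_limit_general
    (σ k ω : ℝ) (hσ : 0 < σ) (hk : 0 < k)
    (C : ℝ → ℝ → ℝ)
    (hC : ∀ lam t, 0 < lam → 0 ≤ t →
      C lam t = σ^2 * (t + (exp (-lam * t) - 1) / lam)) :
    (∀ lam, 0 < lam →
      IntegrableOn (fun t => sin (ω * t) * exp (-(1/2) * k^2 * C lam t)) (Set.Ici 0)) ∧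
    Tendsto
      (fun lam => ∫ t in Set.Ici (0:ℝ), sin (ω * t) * exp (-(1/2) * k^2 * C lam t))
      atTop
      (nhds (∫ t in Set.Ici (0:ℝ), sin (ω * t) * exp (-(1/2) * k^2 * σ^2 * t))) ∧
    (∫ t in Set.Ici (0:ℝ), sin (ω * t) * exp (-(1/2) * k^2 * σ^2 * t))
      = ω / ((1/4) * k^4 * σ^4 + ω^2) := by
  set b := 1 / 2 * k ^ 2 * σ ^ 2 with hb_def
  have hb : 0 < b := by positivity
  have hC_exp : ∀ lam > 0, EqOn (fun t => sin (ω * t) * exp (-(1/2) * k^2 * C lam t))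
      (fun t => sin (ω * t) * exp (-b * (t + (exp (-lam * t) - 1) / lam))) (Ioi 0) := by
    intro lam hlam t ht
    simp only [hC lam t hlam (le_of_lt ht), hb_def]
    ring_nf
  have hlimit : (fun t => sin (ω * t) * exp (-(1/2) * k^2 * σ^2 * t))
      = fun t => sin (ω * t) * exp (-b * t) := by
    ext t; rw [hb_def]; ring_nf
  simp only [integral_Ici_eq_integral_Ioi, hlimit]
  refine ⟨fun lam hlam => ?_, ?_, ?_⟩
  · rw [integrableOn_Ici_iff_integrableOn_Ioi]
    exact (integrableOn_sin_mul_exp_neg_mul_add ω hb (by fun_prop)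
      fun t _ => neg_inv_le_exp_neg_mul_sub_one_div hlam t).congr_fun (hC_exp lam hlam).symm
      measurableSet_Ioi
  · refine (tendsto_integral_sin_mul_exp_neg_mul_add ω hb (M := 1) (fun lam => by fun_prop)
      ?_ fun t ht => tendsto_exp_neg_mul_sub_one_div_atTop (le_of_lt ht)).congr' ?_
    · filter_upwards [eventually_ge_atTop 1] with lam hlam t _
      calc -1 ≤ -lam⁻¹ := neg_le_neg (inv_le_one_of_one_le₀ hlam)
        _ ≤ _ := neg_inv_le_exp_neg_mul_sub_one_div (by linarith) t
    · filter_upwards [eventually_gt_atTop 0] with lam hlam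
      exact (setIntegral_congr_fun measurableSet_Ioi (hC_exp lam hlam)).symm
  · rw [integral_sin_mul_exp_neg_Ioi ω hb, hb_def]
    ring

/-- **Zero-correlation-time limit of the eddy Stokes' drift integral.**
Let `σ, k, ω > 0` and for `lam > 0` define `C lam t := σ^2*(t + (exp (-lam*t) - 1)/lam)`.
Then each integral `∫₀^∞ sin (ω*t) * exp (-(1/2)*k^2 * C lam t) dt` converges
absolutely, and as `lam → ∞` it converges to
`∫₀^∞ sin (ω*t) * exp (-(1/2)*k^2*σ^2*t) dt = ω / ((1/4)*k^4*σ^4 + ω^2)`. -/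
theorem eddy_drift_integral_brownian_limit
    (σ k ω : ℝ) (hσ : 0 < σ) (hk : 0 < k) (hω : 0 < ω)
    (C : ℝ → ℝ → ℝ)
    (hC : ∀ lam t, 0 < lam → 0 ≤ t →
      C lam t = σ^2 * (t + (exp (-lam * t) - 1) / lam)) :
    (∀ lam, 0 < lam →
      IntegrableOn (fun t => sin (ω * t) * exp (-(1/2) * k^2 * C lam t)) (Set.Ici 0)) ∧
    Tendsto
      (fun lam => ∫ t in Set.Ici (0:ℝ), sin (ω * t) * exp (-(1/2) * k^2 * C lam t))
      atTop
      (nhds (∫ t in Set.Ici (0:ℝ), sin (ω * t) * exp (-(1/2) * k^2 * σ^2 * t))) ∧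
    (∫ t in Set.Ici (0:ℝ), sin (ω * t) * exp (-(1/2) * k^2 * σ^2 * t))
      = ω / ((1/4) * k^4 * σ^4 + ω^2) :=
  eddy_drift_integral_brownian_limit_general σ k ω hσ hk C hC
end

section
/- Let g : ℝ → ℝ be an even, integrable function. Then (1/T) ∫₀^T ∫₀^T g(α − β) dα dβ → ∫_{-∞}^{∞} g(t) dt = 2 ∫₀^∞ g(t) dt as T → ∞. -/
/-!
Write `F x = ∫_{-∞}^x g`. The inner integral `∫₀^T g (α - β) dα` equals `F (T - β) - F (-β)`,
so the double integral is `∫₀^T F - ∫₀^T F (-·)`. Since `F → ∫ g` at `+∞` and `F → 0` at `-∞`,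
the Cesàro means of these two terms converge to `∫ g` and `0`.
-/

open MeasureTheory Real Filter Set Topology Asymptotics

section Cesaro

variable {E : Type*} [NormedAddCommGroup E] [NormedSpace ℝ E] {f : ℝ → E}

theorem Asymptotics.isLittleO_intervalIntegral_id_of_tendsto_zero
    (hf : ∀ a b, IntervalIntegrable f volume a b) (h : Tendsto f atTop (𝓝 0)) :
    (fun T => ∫ x in (0 : ℝ)..T, f x) =o[atTop] id := by
  refine isLittleO_iff.2 fun ε hε => ?_
  obtain ⟨A, hA⟩ : ∃ A, ∀ x ≥ A, ‖f x‖ ≤ ε / 2 ∧ 0 ≤ x := eventually_atTop.1 <|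
    (h.norm.eventually (ge_mem_nhds (by simpa using half_pos hε))).and (eventually_ge_atTop 0)
  have hA0 : 0 ≤ A := (hA A le_rfl).2
  filter_upwards [isLittleO_iff.1 (isLittleO_const_id_atTop (∫ x in (0 : ℝ)..A, f x))
    (half_pos hε), eventually_ge_atTop A] with T hT hAT
  have hTail : ‖∫ x in A..T, f x‖ ≤ ε / 2 * ‖T‖ := by
    refine (intervalIntegral.norm_integral_le_of_norm_le_const (C := ε / 2)
      fun x hx => ?_).trans ?_
    · exact (hA x (uIoc_of_le hAT ▸ hx).1.le).1
    · rw [abs_of_nonneg (sub_nonneg.2 hAT), norm_of_nonneg (hA0.trans hAT)]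
      gcongr
      linarith
  calc ‖∫ x in (0 : ℝ)..T, f x‖
      = ‖(∫ x in (0 : ℝ)..A, f x) + ∫ x in A..T, f x‖ := by
        rw [intervalIntegral.integral_add_adjacent_intervals (hf _ _) (hf _ _)]
    _ ≤ ε / 2 * ‖T‖ + ε / 2 * ‖T‖ := (norm_add_le _ _).trans (add_le_add hT hTail)
    _ = ε * ‖id T‖ := by simp only [id]; ring

theorem Filter.Tendsto.cesaro_intervalIntegral [CompleteSpace E]
    (hf : ∀ a b, IntervalIntegrable f volume a b) {L : E} (h : Tendsto f atTop (𝓝 L)) :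
    Tendsto (fun T : ℝ => T⁻¹ • ∫ x in (0 : ℝ)..T, f x) atTop (𝓝 L) := by
  have hsmall := (isLittleO_intervalIntegral_id_of_tendsto_zero (f := fun x => f x - L)
    (fun a b => (hf a b).sub intervalIntegrable_const)
    (tendsto_sub_nhds_zero_iff.2 h)).tendsto_inv_smul_nhds_zero
  rw [← tendsto_sub_nhds_zero_iff]
  refine hsmall.congr' ?_
  filter_upwards [eventually_gt_atTop 0] with T hT
  rw [id, intervalIntegral.integral_sub (hf _ _) intervalIntegrable_const,
    intervalIntegral.integral_const, sub_zero, smul_sub, smul_smul, inv_mul_cancel₀ hT.ne',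
    one_smul]

end Cesaro

section CumulativeIntegral

variable {E : Type*} [NormedAddCommGroup E] [NormedSpace ℝ E] {g : ℝ → E}

noncomputable def cumulativeIntegral (g : ℝ → E) (x : ℝ) : E := ∫ t in Iic x, g t

namespace MeasureTheory.Integrable

theorem cumulativeIntegral_sub (hg : Integrable g) (a b : ℝ) :
    cumulativeIntegral g b - cumulativeIntegral g a = ∫ t in a..b, g t :=
  intervalIntegral.integral_Iic_sub_Iic hg.integrableOn hg.integrableOn

theorem continuous_cumulativeIntegral (hg : Integrable g) : Continuous (cumulativeIntegral g) :=
  ((continuous_const (y := cumulativeIntegral g 0)).add (hg.continuous_primitive 0)).congr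
    fun x => by rw [Pi.add_apply, ← hg.cumulativeIntegral_sub 0 x, add_sub_cancel]

theorem tendsto_cumulativeIntegral_atTop (hg : Integrable g) :
    Tendsto (cumulativeIntegral g) atTop (𝓝 (∫ t, g t)) := by
  have h := tendsto_setIntegral_of_monotone (μ := volume) (fun x : ℝ => measurableSet_Iic)
    (fun _ _ hxy => Iic_subset_Iic.2 hxy) (by rw [iUnion_Iic]; exact hg.integrableOn)
  rwa [iUnion_Iic, Measure.restrict_univ] at h

theorem tendsto_cumulativeIntegral_atBot (hg : Integrable g) :
    Tendsto (cumulativeIntegral g) atBot (𝓝 0) := by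
  have hempty : ⋂ x : ℝ, Iic (-x) = ∅ :=
    eq_empty_of_forall_notMem fun t ht => absurd (mem_iInter.1 ht (-t + 1)) (by simp)
  have h := tendsto_setIntegral_of_antitone (μ := volume) (s := fun x : ℝ => Iic (-x))
    (fun _ => measurableSet_Iic) (fun _ _ hxy => Iic_subset_Iic.2 (neg_le_neg hxy))
    ⟨0, hg.integrableOn⟩
  rw [hempty, Measure.restrict_empty, integral_zero_measure] at h
  exact (h.comp tendsto_neg_atBot_atTop).congr fun x => by simp [cumulativeIntegral]

theorem intervalIntegral_comp_sub_right (hg : Integrable g) (T β : ℝ) :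
    ∫ α in (0 : ℝ)..T, g (α - β) = cumulativeIntegral g (T - β) - cumulativeIntegral g (-β) := by
  rw [intervalIntegral.integral_comp_sub_right, zero_sub, hg.cumulativeIntegral_sub]

theorem intervalIntegral_intervalIntegral_comp_sub (hg : Integrable g) (T : ℝ) :
    ∫ β in (0 : ℝ)..T, ∫ α in (0 : ℝ)..T, g (α - β) =
      (∫ x in (0 : ℝ)..T, cumulativeIntegral g x) -
        ∫ x in (0 : ℝ)..T, cumulativeIntegral g (-x) := by
  have hF := hg.continuous_cumulativeIntegral
  have hF₁ : Continuous fun β => cumulativeIntegral g (T - β) := hF.comp (continuous_sub_left T)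
  have hF₂ : Continuous fun β => cumulativeIntegral g (-β) := hF.comp continuous_neg
  simp_rw [hg.intervalIntegral_comp_sub_right T]
  rw [intervalIntegral.integral_sub (hF₁.intervalIntegrable _ _) (hF₂.intervalIntegrable _ _),
    intervalIntegral.integral_comp_sub_left (cumulativeIntegral g), sub_self, sub_zero]

theorem integral_eq_two_smul_setIntegral_Ici_of_even (hg : Integrable g)
    (heven : ∀ t, g (-t) = g t) : ∫ t, g t = (2 : ℝ) • ∫ t in Ici (0 : ℝ), g t := by
  have hIic : ∫ t in Iic (0 : ℝ), g t = ∫ t in Ici (0 : ℝ), g t := by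
    simpa [heven, integral_Ici_eq_integral_Ioi] using integral_comp_neg_Iic (0 : ℝ) g
  rw [← intervalIntegral.integral_Iic_add_Ioi hg.integrableOn hg.integrableOn, hIic,
    ← integral_Ici_eq_integral_Ioi, two_smul]

variable [CompleteSpace E]

theorem tendsto_inv_smul_intervalIntegral_intervalIntegral_comp_sub (hg : Integrable g) :
    Tendsto (fun T : ℝ => T⁻¹ • ∫ β in (0 : ℝ)..T, ∫ α in (0 : ℝ)..T, g (α - β)) atTop
      (𝓝 (∫ t, g t)) := by
  have hF := hg.continuous_cumulativeIntegral
  have hF_neg : Continuous fun x => cumulativeIntegral g (-x) := hF.comp continuous_neg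
  have hmean := (hg.tendsto_cumulativeIntegral_atTop.cesaro_intervalIntegral
    hF.intervalIntegrable).sub ((hg.tendsto_cumulativeIntegral_atBot.comp
      tendsto_neg_atTop_atBot).cesaro_intervalIntegral hF_neg.intervalIntegrable)
  rw [sub_zero] at hmean
  refine hmean.congr fun T => ?_
  rw [hg.intervalIntegral_intervalIntegral_comp_sub, smul_sub]

end MeasureTheory.Integrable

end CumulativeIntegral

/-- **Cesàro lemma for double integrals of a difference kernel.**
Let `g : ℝ → ℝ` be an even, integrable function.  Then
`(1/T) * ∫₀^T ∫₀^T g (α - β) dα dβ → ∫_{-∞}^∞ g t dt = 2 * ∫₀^∞ g t dt`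
as `T → ∞`. -/
theorem cesaro_double_integral_difference_kernel
    (g : ℝ → ℝ) (heven : ∀ t, g (-t) = g t) (hint : Integrable g) :
    Tendsto
      (fun T : ℝ => (1 / T) * ∫ β in (0:ℝ)..T, ∫ α in (0:ℝ)..T, g (α - β))
      atTop (nhds (∫ t, g t)) ∧
    (∫ t, g t) = 2 * ∫ t in Set.Ici (0:ℝ), g t := by
  simpa only [one_div, smul_eq_mul] using
    ⟨hint.tendsto_inv_smul_intervalIntegral_intervalIntegral_comp_sub,
      hint.integral_eq_two_smul_setIntegral_Ici_of_even heven⟩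
end

section
/- Let σ, k, ω > 0 and for λ > 0 define C_λ(t) := σ²(t + (e^{-λt} − 1)/λ). Then the double integral V(λ) := λ ∫₀^∞ ∫₀^∞ e^{-λβ − (1/2)k² C_λ(α + β)} sin(ω(α + β)) dβ dα converges absolutely for each λ > 0, and V(λ) → ∫₀^∞ e^{-(1/2)k²σ² α} sin(ωα) dα = ω/((1/4)k⁴σ⁴ + ω²) as λ → ∞. -/
open MeasureTheory Real Filter Set Topology

/-!
Put `c = k²σ²/2` and `t = α + β`. Shearing `(α, β) ↦ (α + β, β)` and integrating out `β`, the
weight `λe^{-λβ}` integrates to `1 - e^{-λt}` over `[0, t]`, so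
`V(λ) = ∫₀^∞ (1 - e^{-λt}) e^{-c(t + (e^{-λt} - 1)/λ)} sin(ωt) dt`.
Since `(e^{-λt} - 1)/λ ≥ -1/λ`, the integrand is bounded by `e^{c} e^{-ct}` for `λ ≥ 1`, and it
tends to `e^{-ct} sin(ωt)` pointwise, so dominated convergence gives the limit. Its value is
`Im ∫₀^∞ e^{(-c + iω)t} dt = Im 1/(c - iω) = ω/(c² + ω²)`.
-/

theorem integral_exp_neg_mul_mul_sin {c : ℝ} (hc : 0 < c) (ω : ℝ) :
    ∫ t in Ioi 0, exp (-(c * t)) * sin (ω * t) = ω / (c ^ 2 + ω ^ 2) := by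
  set a : ℂ := -c + ω * Complex.I
  have ha : a.re < 0 := by simpa [a] using hc
  have hpt : ∀ t : ℝ, exp (-(c * t)) * sin (ω * t) = (Complex.exp (a * t)).im := by
    intro t
    rw [Complex.exp_im]
    simp [a]
  have him := integral_im (𝕜 := ℂ) (integrableOn_exp_mul_complex_Ioi ha 0)
  simp only [RCLike.im_to_complex] at him
  simp_rw [hpt, him, integral_exp_mul_complex_Ioi ha 0]
  simp [a, Complex.normSq_apply, sq, neg_div]

theorem tendsto_exp_neg_mul_atTop {t : ℝ} (ht : 0 < t) :
    Tendsto (fun lam => exp (-(lam * t))) atTop (𝓝 0) :=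
  tendsto_exp_neg_atTop_nhds_zero.comp (tendsto_id.atTop_mul_const ht)

theorem integrableOn_Ici_exp_neg_mul {a : ℝ} (ha : 0 < a) :
    IntegrableOn (fun t => exp (-(a * t))) (Ici 0) := by
  rw [integrableOn_Ici_iff_integrableOn_Ioi]
  simpa only [neg_mul] using exp_neg_integrableOn_Ioi 0 ha

theorem mul_intervalIntegral_exp_neg_mul {lam : ℝ} (hlam : lam ≠ 0) (t : ℝ) :
    lam * ∫ β in 0..t, exp (-(lam * β)) = 1 - exp (-(lam * t)) := by
  simp_rw [← neg_mul]
  rw [intervalIntegral.integral_comp_mul_left exp (neg_ne_zero.2 hlam), integral_exp, smul_eq_mul,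
    mul_zero, exp_zero, inv_neg, ← mul_assoc, mul_neg, mul_inv_cancel₀ hlam]
  ring

theorem measurableEmbedding_add_prod {G : Type*} [MeasurableSpace G] [AddGroup G]
    [MeasurableAdd₂ G] [MeasurableSub₂ G] :
    MeasurableEmbedding (fun p : G × G => (p.1 + p.2, p.2)) :=
  .of_measurable_inverse (g := fun q => (q.1 - q.2, q.2)) (by fun_prop)
    (by rw [range_eq_univ.2 fun q => ⟨(q.1 - q.2, q.2), by simp⟩]; exact .univ)
    (by fun_prop) (fun p => by simp)

theorem setIntegral_Ici_setIntegral_Ici_add {w F : ℝ → ℝ}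
    (h : IntegrableOn (fun p : ℝ × ℝ => w p.2 * F (p.1 + p.2)) (Ici 0 ×ˢ Ici 0)) :
    ∫ α in Ici 0, ∫ β in Ici 0, w β * F (α + β) = ∫ t in Ici 0, (∫ β in 0..t, w β) * F t := by
  set T : Set (ℝ × ℝ) := {q | 0 ≤ q.2 ∧ q.2 ≤ q.1}
  have hT : MeasurableSet T := (measurableSet_le measurable_const measurable_snd).inter
    (measurableSet_le measurable_snd measurable_fst)
  have hshear : MeasurePreserving (fun p : ℝ × ℝ => (p.1 + p.2, p.2)) := by
    rw [Measure.volume_eq_prod]; exact measurePreserving_add_prod volume volume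
  have hpre : (fun p : ℝ × ℝ => (p.1 + p.2, p.2)) ⁻¹' T = Ici 0 ×ˢ Ici 0 := by
    ext p; simp [T, and_comm, -Ici_prod_Ici]
  have hslice : ∀ t β, T.indicator (fun q => w q.2 * F q.1) (t, β)
      = (Icc 0 t).indicator (fun β => w β * F t) β := by
    intro t β; simp [T, indicator_apply]
  calc ∫ α in Ici 0, ∫ β in Ici 0, w β * F (α + β)
      = ∫ p in Ici 0 ×ˢ Ici 0, w p.2 * F (p.1 + p.2) := by
        rw [Measure.volume_eq_prod, setIntegral_prod _ (by rwa [← Measure.volume_eq_prod])]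
    _ = ∫ q in T, w q.2 * F q.1 := by
        rw [← hpre]
        exact hshear.setIntegral_preimage_emb measurableEmbedding_add_prod
          (fun q => w q.2 * F q.1) T
    _ = ∫ t, ∫ β in Icc 0 t, w β * F t := by
        rw [← integral_indicator hT, Measure.volume_eq_prod, integral_prod]
        · simp_rw [hslice, integral_indicator measurableSet_Icc]
        · rwa [← Measure.volume_eq_prod, integrable_indicator_iff hT,
            ← hshear.integrableOn_comp_preimage measurableEmbedding_add_prod, hpre]
    _ = ∫ t in Ici 0, ∫ β in Icc 0 t, w β * F t :=
        (setIntegral_eq_integral_of_forall_compl_eq_zero fun t ht => by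
          rw [Icc_eq_empty (notMem_Ici.1 ht).not_ge, Measure.restrict_empty,
            integral_zero_measure]).symm
    _ = ∫ t in Ici 0, (∫ β in 0..t, w β) * F t :=
        setIntegral_congr_fun measurableSet_Ici fun t ht => by
          rw [integral_mul_const, integral_Icc_eq_integral_Ioc,
            ← intervalIntegral.integral_of_le ht]

/-- `exp (-(k²/2) C_λ(t)) sin (ωt)` with `c = k²σ²/2`. -/
noncomputable def inertialIntegrand (c ω lam t : ℝ) : ℝ :=
  exp (-(c * (t + (exp (-(lam * t)) - 1) / lam))) * sin (ω * t)

@[fun_prop]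
theorem continuous_inertialIntegrand (c ω lam : ℝ) : Continuous (inertialIntegrand c ω lam) := by
  unfold inertialIntegrand; fun_prop

theorem abs_inertialIntegrand_le {c lam : ℝ} (hc : 0 ≤ c) (hlam : 0 < lam) (ω t : ℝ) :
    |inertialIntegrand c ω lam t| ≤ exp (c / lam) * exp (-(c * t)) := by
  have hexponent : -(c * (t + (exp (-(lam * t)) - 1) / lam)) ≤ c / lam + -(c * t) := by
    have hdrop : 0 ≤ c * exp (-(lam * t)) / lam := by positivity
    have hsplit : -(c * (t + (exp (-(lam * t)) - 1) / lam))
        = c / lam + -(c * t) - c * exp (-(lam * t)) / lam := by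
      field_simp
      ring
    linarith
  calc |inertialIntegrand c ω lam t|
      = exp (-(c * (t + (exp (-(lam * t)) - 1) / lam))) * |sin (ω * t)| := by
        rw [inertialIntegrand, abs_mul, abs_of_pos (exp_pos _)]
    _ ≤ exp (c / lam + -(c * t)) * 1 :=
        mul_le_mul (exp_le_exp.2 hexponent) (abs_sin_le_one _) (abs_nonneg _) (exp_pos _).le
    _ = exp (c / lam) * exp (-(c * t)) := by rw [mul_one, exp_add]

theorem tendsto_inertialIntegrand (c ω : ℝ) {t : ℝ} (ht : 0 < t) :
    Tendsto (fun lam => inertialIntegrand c ω lam t) atTop (𝓝 (exp (-(c * t)) * sin (ω * t))) := by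
  have hcorr : Tendsto (fun lam => (exp (-(lam * t)) - 1) / lam) atTop (𝓝 0) :=
    ((tendsto_exp_neg_mul_atTop ht).sub_const 1).div_atTop tendsto_id
  simpa only [inertialIntegrand, add_zero] using
    ((hcorr.const_add t).const_mul c).neg.rexp.mul_const (sin (ω * t))

theorem integrableOn_exp_neg_mul_inertialIntegrand_add {c lam : ℝ} (hc : 0 < c) (hlam : 0 < lam)
    (ω : ℝ) :
    IntegrableOn (fun p : ℝ × ℝ => exp (-(lam * p.2)) * inertialIntegrand c ω lam (p.1 + p.2))
      (Ici 0 ×ˢ Ici 0) := by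
  have hbound : IntegrableOn
      (fun p : ℝ × ℝ => (exp (c / lam) * exp (-(c * p.1))) * exp (-((lam + c) * p.2)))
      (Ici 0 ×ˢ Ici 0) := by
    rw [IntegrableOn, Measure.volume_eq_prod, ← Measure.prod_restrict]
    exact ((integrableOn_Ici_exp_neg_mul hc).const_mul _).mul_prod
      (integrableOn_Ici_exp_neg_mul (by positivity))
  refine hbound.mono' (by fun_prop) (.of_forall fun p => ?_)
  calc ‖exp (-(lam * p.2)) * inertialIntegrand c ω lam (p.1 + p.2)‖
      = exp (-(lam * p.2)) * |inertialIntegrand c ω lam (p.1 + p.2)| := by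
        rw [norm_mul, norm_of_nonneg (exp_pos _).le, norm_eq_abs]
    _ ≤ exp (-(lam * p.2)) * (exp (c / lam) * exp (-(c * (p.1 + p.2)))) :=
        mul_le_mul_of_nonneg_left (abs_inertialIntegrand_le hc.le hlam ω _) (exp_pos _).le
    _ = (exp (c / lam) * exp (-(c * p.1))) * exp (-((lam + c) * p.2)) := by
        simp only [← exp_add]; ring_nf

theorem mul_integral_integral_exp_neg_mul_inertialIntegrand_add {c lam : ℝ} (hc : 0 < c)
    (hlam : 0 < lam) (ω : ℝ) :
    lam * ∫ α in Ici 0, ∫ β in Ici 0, exp (-(lam * β)) * inertialIntegrand c ω lam (α + β)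
      = ∫ t in Ioi 0, (1 - exp (-(lam * t))) * inertialIntegrand c ω lam t := by
  rw [setIntegral_Ici_setIntegral_Ici_add
      (integrableOn_exp_neg_mul_inertialIntegrand_add hc hlam ω), integral_Ici_eq_integral_Ioi, ← integral_const_mul]
  simp_rw [← mul_assoc, mul_intervalIntegral_exp_neg_mul hlam.ne']

theorem tendsto_integral_one_sub_exp_mul_inertialIntegrand {c : ℝ} (hc : 0 < c) (ω : ℝ) :
    Tendsto (fun lam => ∫ t in Ioi 0, (1 - exp (-(lam * t))) * inertialIntegrand c ω lam t) atTop
      (𝓝 (∫ t in Ioi 0, exp (-(c * t)) * sin (ω * t))) := by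
  refine tendsto_integral_filter_of_dominated_convergence (fun t => exp c * exp (-(c * t)))
    (.of_forall fun lam => by fun_prop) ?_
    (((integrableOn_Ici_exp_neg_mul hc).mono_set Ioi_subset_Ici_self).const_mul _) ?_
  · filter_upwards [eventually_ge_atTop 1] with lam hlam
    refine (ae_restrict_iff' measurableSet_Ioi).2 (.of_forall fun t (ht : 0 < t) => ?_)
    have hlam0 : 0 < lam := by linarith
    have hdamp : |1 - exp (-(lam * t))| ≤ 1 := by
      have : exp (-(lam * t)) ≤ 1 := exp_le_one_iff.2 (by nlinarith)
      rw [abs_le]; constructor <;> linarith [exp_pos (-(lam * t))]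
    calc ‖(1 - exp (-(lam * t))) * inertialIntegrand c ω lam t‖
        = |1 - exp (-(lam * t))| * |inertialIntegrand c ω lam t| := abs_mul _ _
      _ ≤ 1 * (exp (c / lam) * exp (-(c * t))) :=
          mul_le_mul hdamp (abs_inertialIntegrand_le hc.le hlam0 ω t) (abs_nonneg _) zero_le_one
      _ ≤ exp c * exp (-(c * t)) := by
          rw [one_mul]
          gcongr
          exact div_le_self hc.le hlam
  · refine (ae_restrict_iff' measurableSet_Ioi).2 (.of_forall fun t (ht : 0 < t) => ?_)
    simpa using ((tendsto_const_nhds (x := (1 : ℝ))).sub (tendsto_exp_neg_mul_atTop ht)).mul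
      (tendsto_inertialIntegrand c ω ht)

theorem inertia_drift_zero_mass_limit_general
    (σ k ω : ℝ) (hσ : 0 < σ) (hk : 0 < k)
    (C : ℝ → ℝ → ℝ)
    (hC : ∀ lam t, 0 < lam → 0 ≤ t →
      C lam t = σ^2 * (t + (exp (-lam * t) - 1) / lam))
    (V : ℝ → ℝ)
    (hV : ∀ lam, 0 < lam →
      V lam = lam * ∫ α in Set.Ici (0:ℝ), ∫ β in Set.Ici (0:ℝ),
        exp (-lam * β - (1/2) * k^2 * C lam (α + β)) * sin (ω * (α + β))) :
    (∀ lam, 0 < lam →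
      IntegrableOn
        (fun p : ℝ × ℝ =>
          exp (-lam * p.2 - (1/2) * k^2 * C lam (p.1 + p.2)) * sin (ω * (p.1 + p.2)))
        (Set.Ici 0 ×ˢ Set.Ici 0)) ∧
    Tendsto V atTop
      (nhds (∫ α in Set.Ici (0:ℝ), exp (-(1/2) * k^2 * σ^2 * α) * sin (ω * α))) ∧
    (∫ α in Set.Ici (0:ℝ), exp (-(1/2) * k^2 * σ^2 * α) * sin (ω * α))
      = ω / ((1/4) * k^4 * σ^4 + ω^2) := by
  obtain ⟨c, hc_def⟩ : ∃ c : ℝ, c = 1 / 2 * k ^ 2 * σ ^ 2 := ⟨_, rfl⟩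
  have hc : 0 < c := by rw [hc_def]; positivity
  have hintegrand : ∀ lam, 0 < lam → ∀ α β : ℝ, 0 ≤ α + β →
      exp (-lam * β - (1/2) * k^2 * C lam (α + β)) * sin (ω * (α + β))
        = exp (-(lam * β)) * inertialIntegrand c ω lam (α + β) := by
    intro lam hlam α β hαβ
    rw [hC lam _ hlam hαβ, inertialIntegrand, ← mul_assoc (exp _), ← exp_add, hc_def]
    ring_nf
  have hlimit : ∫ α in Ici 0, exp (-(1/2) * k^2 * σ^2 * α) * sin (ω * α)
      = ∫ t in Ioi 0, exp (-(c * t)) * sin (ω * t) := by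
    rw [integral_Ici_eq_integral_Ioi]
    refine setIntegral_congr_fun measurableSet_Ioi fun t _ => ?_
    rw [hc_def]
    ring_nf
  refine ⟨fun lam hlam => ?_, ?_, ?_⟩
  · exact (integrableOn_exp_neg_mul_inertialIntegrand_add hc hlam ω).congr_fun
      (fun p hp => (hintegrand lam hlam p.1 p.2 (add_nonneg hp.1 hp.2)).symm)
      (measurableSet_Ici.prod measurableSet_Ici)
  · rw [hlimit]
    refine (tendsto_integral_one_sub_exp_mul_inertialIntegrand hc ω).congr' ?_
    filter_upwards [eventually_gt_atTop 0] with lam hlam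
    rw [hV lam hlam, setIntegral_congr_fun measurableSet_Ici fun α hα =>
        setIntegral_congr_fun measurableSet_Ici fun β hβ =>
          hintegrand lam hlam α β (add_nonneg hα hβ),
      mul_integral_integral_exp_neg_mul_inertialIntegrand_add hc hlam ω]
  · rw [hlimit, integral_exp_neg_mul_mul_sin hc, hc_def]
    ring

/-- **Zero-mass limit of stochastic Stokes' drift with inertia.**
Let `σ, k, ω > 0` and for `lam > 0` define `C lam t := σ^2*(t + (exp (-lam*t) - 1)/lam)`.
Then the double integral
`V lam := lam * ∫₀^∞ ∫₀^∞ exp (-lam*β - (1/2)*k^2 * C lam (α+β)) * sin (ω*(α+β)) dβ dα`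
converges absolutely for each `lam > 0`, and
`V lam → ∫₀^∞ exp (-(1/2)*k^2*σ^2*α) * sin (ω*α) dα = ω / ((1/4)*k^4*σ^4 + ω^2)`
as `lam → ∞`. -/
theorem inertia_drift_zero_mass_limit
    (σ k ω : ℝ) (hσ : 0 < σ) (hk : 0 < k) (hω : 0 < ω)
    (C : ℝ → ℝ → ℝ)
    (hC : ∀ lam t, 0 < lam → 0 ≤ t →
      C lam t = σ^2 * (t + (exp (-lam * t) - 1) / lam))
    (V : ℝ → ℝ)
    (hV : ∀ lam, 0 < lam →
      V lam = lam * ∫ α in Set.Ici (0:ℝ), ∫ β in Set.Ici (0:ℝ),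
        exp (-lam * β - (1/2) * k^2 * C lam (α + β)) * sin (ω * (α + β))) :
    (∀ lam, 0 < lam →
      IntegrableOn
        (fun p : ℝ × ℝ =>
          exp (-lam * p.2 - (1/2) * k^2 * C lam (p.1 + p.2)) * sin (ω * (p.1 + p.2)))
        (Set.Ici 0 ×ˢ Set.Ici 0)) ∧
    Tendsto V atTop
      (nhds (∫ α in Set.Ici (0:ℝ), exp (-(1/2) * k^2 * σ^2 * α) * sin (ω * α))) ∧
    (∫ α in Set.Ici (0:ℝ), exp (-(1/2) * k^2 * σ^2 * α) * sin (ω * α))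
      = ω / ((1/4) * k^4 * σ^4 + ω^2) :=
  inertia_drift_zero_mass_limit_general σ k ω hσ hk C hC V hV
end
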